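/- arXiv:2111.03228 — 7 statements merged into one kernel-verified Lean document; each statement's English description precedes it below -/
import Mathlib

section
/- If G is a clique-friendly k-uniform hypergraph, X ⊆ V(G) with |X| < k-1, and K is a clique in the link lk_G(X), then K ∪ X is a clique of G. -/
open Finset

/-- Number of edges of the hypergraph `E` contained in the vertex set `S`. -/
def edgesIn {V : Type*} [DecidableEq V] (E : Finset V → Prop) [DecidablePred E]
    (S : Finset V) : ℕ :=
  (S.powerset.filter E).card

/-- A `k`-uniform hypergraph is clique friendly if every set of `k+1` vertices
contains either `k+1` edges or at most two edges. -/
def CliqueFriendly {V : Type*} [DecidableEq V] (k : ℕ) (E : Finset V → Prop)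
    [DecidablePred E] : Prop :=
  ∀ S : Finset V, S.card = k + 1 → edgesIn E S = k + 1 ∨ edgesIn E S ≤ 2

/-- `K` is a clique of the `j`-uniform hypergraph `E`: every `j`-subset of `K` is an edge. -/
def IsHyperClique {V : Type*} (j : ℕ) (E : Finset V → Prop) (K : Finset V) : Prop :=
  ∀ S ⊆ K, S.card = j → E S

/-!
Induct on the number of vertices of `X` missing from a `k`-subset `S` of `K ∪ X`. If `x ∈ X`
is missing, `T = S ∪ {x}` has `k + 1` vertices, and `T \ {v}` is an edge by induction for each
of the at least `k - (|X| - 1) ≥ 3` vertices `v ∈ S \ X`. Clique friendliness then forces all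
`k`-subsets of `T`, in particular `S`, to be edges.
-/

section

variable {V : Type*} [DecidableEq V] {k : ℕ} {E : Finset V → Prop} [DecidablePred E]

lemma card_le_edgesIn_of_forall_erase {A T : Finset V} (hAT : A ⊆ T)
    (hA : ∀ v ∈ A, E (T.erase v)) : A.card ≤ edgesIn E T :=
  card_le_card_of_injOn T.erase
    (fun v hv => mem_filter.mpr ⟨mem_powerset.mpr (erase_subset v T), hA v hv⟩)
    ((erase_injOn T).mono hAT)

lemma CliqueFriendly.edge_of_three_le_edgesIn (hcf : CliqueFriendly k E)
    (huni : ∀ e, E e → e.card = k) {T : Finset V} (hT : T.card = k + 1)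
    (h3 : 3 ≤ edgesIn E T) {S : Finset V} (hST : S ⊆ T) (hS : S.card = k) : E S := by
  have hfull : edgesIn E T = k + 1 := by have := hcf T hT; omega
  have hsub : T.powerset.filter E ⊆ T.powersetCard k := fun e he => by
    rw [mem_filter, mem_powerset] at he
    exact mem_powersetCard.mpr ⟨he.1, huni e he.2⟩
  have heq : T.powerset.filter E = T.powersetCard k := by
    refine eq_of_subset_of_card_le hsub ?_
    rw [card_powersetCard, hT, Nat.choose_succ_self_right]
    exact hfull.ge
  have hS' : S ∈ T.powerset.filter E := heq ▸ mem_powersetCard.mpr ⟨hST, hS⟩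
  exact (mem_filter.mp hS').2

lemma card_sdiff_insert_erase_lt {X S : Finset V} {x v : V} (hx : x ∈ X \ S) (hv : v ∉ X) :
    (X \ insert x (S.erase v)).card < (X \ S).card := by
  refine card_lt_card ⟨fun z hz => ?_, fun h => ?_⟩
  · simp only [mem_sdiff, mem_insert, mem_erase, not_or, not_and] at hz ⊢
    exact ⟨hz.1, fun hzS => hz.2.2 (fun hzv => hv (hzv ▸ hz.1)) hzS⟩
  · exact (mem_sdiff.mp (h hx)).2 (mem_insert_self x _)

end

theorem stmt1_general {V : Type*} [DecidableEq V] (k : ℕ)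
    (E : Finset V → Prop) [DecidablePred E]
    (huni : ∀ e, E e → e.card = k)
    (hcf : CliqueFriendly k E)
    (X K : Finset V) (hX : X.card < k - 1)
    (hK : ∀ Y ⊆ K, Y.card = k - X.card → E (X ∪ Y)) :
    IsHyperClique k E (K ∪ X) := by
  intro S hS hc
  induction hn : (X \ S).card using Nat.strong_induction_on generalizing S with
  | _ n ih =>
    obtain hempty | ⟨x, hx⟩ := (X \ S).eq_empty_or_nonempty
    · have hXS : X ⊆ S := sdiff_eq_empty_iff_subset.mp hempty
      have hlink := hK (S \ X) (fun v hv => (mem_union.mp (hS (mem_sdiff.mp hv).1)).resolve_right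
        (mem_sdiff.mp hv).2) (by rw [card_sdiff_of_subset hXS, hc])
      rwa [union_sdiff_of_subset hXS] at hlink
    · obtain ⟨hxX, hxS⟩ := mem_sdiff.mp hx
      have hT : (insert x S).card = k + 1 := by rw [card_insert_of_notMem hxS, hc]
      have hA : 3 ≤ (S \ X).card := by
        have hSX : (S ∩ X).card < X.card :=
          card_lt_card ⟨inter_subset_right, fun h => hxS (mem_inter.mp (h hxX)).1⟩
        have := card_sdiff_add_card_inter S X
        omega
      refine hcf.edge_of_three_le_edgesIn huni hT
        (hA.trans (card_le_edgesIn_of_forall_erase (sdiff_subset.trans (subset_insert x S))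
          fun v hv => ?_)) (subset_insert x S) hc
      obtain ⟨hvS, hvX⟩ := mem_sdiff.mp hv
      rw [erase_insert_of_ne (ne_of_mem_of_not_mem hvS hxS).symm]
      refine ih _ (hn ▸ card_sdiff_insert_erase_lt hx hvX) _ (insert_subset (mem_union_right K hxX)
        ((erase_subset v S).trans hS)) ?_ rfl
      rw [card_insert_of_notMem (fun h => hxS (mem_of_mem_erase h)), card_erase_of_mem hvS, hc]
      omega

/-- If `G` is a clique-friendly `k`-uniform hypergraph, `X ⊆ V(G)` with `|X| < k-1`,
and `K` is a clique in the link of `X`, then `K ∪ X` is a clique of `G`. -/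
theorem stmt1 {V : Type*} [Fintype V] [DecidableEq V] (k : ℕ)
    (E : Finset V → Prop) [DecidablePred E]
    (huni : ∀ e, E e → e.card = k)
    (hcf : CliqueFriendly k E)
    (X K : Finset V) (hX : X.card < k - 1) (hdisj : Disjoint K X)
    (hK : ∀ Y ⊆ K, Y.card = k - X.card → E (X ∪ Y)) :
    IsHyperClique k E (K ∪ X) :=
  stmt1_general k E huni hcf X K hX hK
end

section
/- If G is a clique-friendly k-uniform hypergraph, then for every X ⊆ V(G) with |X| < k-1 contained in some clique of maximum size, ω(lk_G(X)) = ω(G) - |X|, where ω denotes the maximum size of a clique. -/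
open Finset

/-- The clique number of the `j`-uniform hypergraph `E` on the vertex set `W`:
the maximum size of a subset of `W` all of whose `j`-subsets are edges. -/
def cliqueNumOn {V : Type*} [DecidableEq V] (j : ℕ) (W : Finset V)
    (E : Finset V → Prop) [DecidablePred E] : ℕ :=
  (W.powerset.filter fun K => ∀ S ∈ K.powersetCard j, E S).sup Finset.card

/-- The link of `X`: the `(k-|X|)`-uniform hypergraph on `V \ X` whose edges are the
sets `Y` (disjoint from `X`) with `X ∪ Y` an edge. -/
def linkE {V : Type*} [DecidableEq V] (E : Finset V → Prop) (X : Finset V) :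
    Finset V → Prop :=
  fun Y => Disjoint Y X ∧ E (X ∪ Y)

instance {V : Type*} [DecidableEq V] (E : Finset V → Prop) [DecidablePred E]
    (X : Finset V) : DecidablePred (linkE E X) := fun Y =>
  inferInstanceAs (Decidable (Disjoint Y X ∧ E (X ∪ Y)))

lemma key_extend {V : Type*} [DecidableEq V] (k : ℕ)
    (E : Finset V → Prop) [DecidablePred E]
    (huni : ∀ e, E e → e.card = k)
    (hcf : CliqueFriendly k E)
    (X : Finset V) (hX : X.card < k - 1)
    (L : Finset V)
    (hL : ∀ S ⊆ L, S.card = k - X.card → E (X ∪ S)) :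
    ∀ m (S : Finset V), S ⊆ X ∪ L → S.card = k → (X \ S).card ≤ m → E S := by
  intro m
  induction m with
  | zero =>
    intro S hSsub hScard hm
    have hXS : X ⊆ S := by
      rw [← Finset.sdiff_eq_empty_iff_subset]
      exact Finset.card_eq_zero.mp (Nat.le_zero.mp hm)
    have h1 : S \ X ⊆ L := by
      intro a ha
      simp only [Finset.mem_sdiff] at ha
      rcases Finset.mem_union.mp (hSsub ha.1) with h | h
      · exact absurd h ha.2
      · exact h
    have h2 : (S \ X).card = k - X.card := by
      rw [Finset.card_sdiff_of_subset hXS, hScard]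
    have := hL _ h1 h2
    rwa [Finset.union_sdiff_of_subset hXS] at this
  | succ m ih =>
    intro S hSsub hScard hm
    rcases Nat.lt_or_ge (X \ S).card (m+1) with h | h
    · exact ih S hSsub hScard (Nat.lt_succ_iff.mp h)
    have hcard : (X \ S).card = m + 1 := le_antisymm hm h
    have hne : (X \ S).Nonempty := by rw [← Finset.card_pos, hcard]; omega
    obtain ⟨x, hx⟩ := hne
    have hxX : x ∈ X := (Finset.mem_sdiff.mp hx).1
    have hxS : x ∉ S := (Finset.mem_sdiff.mp hx).2
    set T := insert x S with hT
    have hTsub : T ⊆ X ∪ L := Finset.insert_subset (Finset.mem_union_left _ hxX) hSsub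
    have hTcard : T.card = k + 1 := by rw [hT, Finset.card_insert_of_notMem hxS, hScard]
    have hXT : (X \ T).card = m := by
      rw [hT, Finset.sdiff_insert, Finset.card_erase_of_mem hx, hcard]
      omega
    have hIH : ∀ y ∈ T \ X, E (T.erase y) := by
      intro y hy
      have hyT : y ∈ T := (Finset.mem_sdiff.mp hy).1
      have hyX : y ∉ X := (Finset.mem_sdiff.mp hy).2
      apply ih
      · exact (Finset.erase_subset _ _).trans hTsub
      · simp [Finset.card_erase_of_mem hyT, hTcard]
      · have heq : X \ T.erase y = X \ T := by
          ext a
          simp only [Finset.mem_sdiff, Finset.mem_erase]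
          constructor
          · rintro ⟨ha, h2⟩
            exact ⟨ha, fun hat => h2 ⟨fun he => hyX (he ▸ ha), hat⟩⟩
          · rintro ⟨ha, h2⟩
            exact ⟨ha, fun hh => h2 hh.2⟩
        rw [heq, hXT]
    have hTXcard : 3 ≤ (T \ X).card := by
      have h1 := Finset.card_sdiff_add_card_inter T X
      have h2 : (T ∩ X).card ≤ X.card := Finset.card_le_card Finset.inter_subset_right
      omega
    have himg : (T \ X).image (fun y => T.erase y) ⊆ T.powerset.filter E := by
      intro A hA
      simp only [Finset.mem_image] at hA
      obtain ⟨y, hy, rfl⟩ := hA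
      simp only [Finset.mem_filter, Finset.mem_powerset]
      exact ⟨Finset.erase_subset _ _, hIH y hy⟩
    have hinj : Set.InjOn (fun y => T.erase y) ↑(T \ X) := by
      intro y1 h1 y2 h2 he
      simp only [Finset.coe_sdiff, Set.mem_diff, Finset.mem_coe] at h1 h2
      by_contra hne
      have hmem : y1 ∈ T.erase y2 := Finset.mem_erase.mpr ⟨hne, h1.1⟩
      have he' : T.erase y1 = T.erase y2 := he
      rw [← he'] at hmem
      exact (Finset.notMem_erase y1 T) hmem
    have h3 : 3 ≤ edgesIn E T := by
      have hle := Finset.card_le_card himg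
      rw [Finset.card_image_of_injOn hinj] at hle
      unfold edgesIn
      omega
    have hall : edgesIn E T = k + 1 := by
      rcases hcf T hTcard with h | h
      · exact h
      · omega
    have hsub : T.powerset.filter E ⊆ T.powersetCard k := by
      intro A hA
      simp only [Finset.mem_filter, Finset.mem_powerset] at hA
      exact Finset.mem_powersetCard.mpr ⟨hA.1, huni A hA.2⟩
    have heq : T.powerset.filter E = T.powersetCard k := by
      apply Finset.eq_of_subset_of_card_le hsub
      rw [Finset.card_powersetCard, hTcard, Nat.choose_succ_self_right]
      unfold edgesIn at hall
      omega
    have hS : S ∈ T.powersetCard k :=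
      Finset.mem_powersetCard.mpr ⟨Finset.subset_insert _ _, hScard⟩
    rw [← heq] at hS
    exact (Finset.mem_filter.mp hS).2

lemma le_cliqueNumOn {V : Type*} [DecidableEq V] (j : ℕ) (W : Finset V)
    (E : Finset V → Prop) [DecidablePred E] (K : Finset V) (hKW : K ⊆ W)
    (hK : ∀ S ∈ K.powersetCard j, E S) : K.card ≤ cliqueNumOn j W E :=
  Finset.le_sup (Finset.mem_filter.mpr ⟨Finset.mem_powerset.mpr hKW, hK⟩)

lemma cliqueNumOn_le {V : Type*} [DecidableEq V] (j : ℕ) (W : Finset V)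
    (E : Finset V → Prop) [DecidablePred E] (n : ℕ)
    (h : ∀ K ⊆ W, (∀ S ∈ K.powersetCard j, E S) → K.card ≤ n) :
    cliqueNumOn j W E ≤ n := by
  apply Finset.sup_le
  intro K hK
  simp only [Finset.mem_filter, Finset.mem_powerset] at hK
  exact h K hK.1 hK.2

/-- If `G` is clique friendly and `X`, with `|X| < k-1`, is contained in some maximum
clique, then `ω(lk_G(X)) = ω(G) - |X|`. -/
theorem stmt2 {V : Type*} [Fintype V] [DecidableEq V] (k : ℕ)
    (E : Finset V → Prop) [DecidablePred E]
    (huni : ∀ e, E e → e.card = k)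
    (hcf : CliqueFriendly k E)
    (X : Finset V) (hX : X.card < k - 1)
    (hmax : ∃ K : Finset V, X ⊆ K ∧ IsHyperClique k E K ∧
      K.card = cliqueNumOn k Finset.univ E) :
    cliqueNumOn (k - X.card) (Finset.univ \ X) (linkE E X) =
      cliqueNumOn k Finset.univ E - X.card := by
  obtain ⟨K, hXK, hK, hKcard⟩ := hmax
  have hXk : X.card ≤ k := by omega
  apply le_antisymm
  · -- upper bound
    apply cliqueNumOn_le
    intro A hAsub hAcl
    have hdisjAX : Disjoint A X := Finset.disjoint_left.mpr fun a ha h =>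
      (Finset.mem_sdiff.mp (hAsub ha)).2 h
    have hclique : ∀ S ⊆ X ∪ A, S.card = k → E S := fun S h1 h2 =>
      key_extend k E huni hcf X hX A
        (fun S' hS' hc => (hAcl S' (Finset.mem_powersetCard.mpr ⟨hS', hc⟩)).2)
        (X \ S).card S h1 h2 le_rfl
    have hle : (X ∪ A).card ≤ cliqueNumOn k Finset.univ E :=
      le_cliqueNumOn k _ E _ (Finset.subset_univ _) fun S hS =>
        hclique S (Finset.mem_powersetCard.mp hS).1 (Finset.mem_powersetCard.mp hS).2
    have hcu : (X ∪ A).card = X.card + A.card :=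
      Finset.card_union_of_disjoint hdisjAX.symm
    omega
  · -- lower bound
    have hle : (K \ X).card ≤
        cliqueNumOn (k - X.card) (Finset.univ \ X) (linkE E X) := by
      apply le_cliqueNumOn
      · exact Finset.sdiff_subset_sdiff (Finset.subset_univ K) Finset.Subset.rfl
      · intro S hS
        obtain ⟨hS1, hS2⟩ := Finset.mem_powersetCard.mp hS
        have hdisj : Disjoint S X := Finset.disjoint_left.mpr fun a ha h =>
          (Finset.mem_sdiff.mp (hS1 ha)).2 h
        refine ⟨hdisj, hK _ ?_ ?_⟩
        · exact Finset.union_subset hXK (hS1.trans Finset.sdiff_subset)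
        · rw [Finset.card_union_of_disjoint hdisj.symm, hS2]; omega
    have hc : (K \ X).card = K.card - X.card := Finset.card_sdiff_of_subset hXK
    have hXle : X.card ≤ K.card := Finset.card_le_card hXK
    omega
end

section
/- Let G be a k-uniform hypergraph admitting a proper coloring of the (k-1)-subsets of V(G) with ω(G)-k+2 colors, such that no edge of G has all its (k-1)-subsets monochromatic, and suppose the complement G^c admits such a proper coloring with α(G)-k+2 colors. Then |V(G)| < R_{(α(G)-k+2)(ω(G)-k+2)}(k), where R_s(k) is the minimum n such that every s-coloring of the (k-1)-subsets of an n-set contains k elements all of whose (k-1)-subsets receive the same color. -/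
open Finset

/-- The complement of the `k`-uniform hypergraph `E`: the edges are the `k`-sets that
are not edges of `E`. -/
def complE {V : Type*} (k : ℕ) (E : Finset V → Prop) : Finset V → Prop :=
  fun S => S.card = k ∧ ¬ E S

instance {V : Type*} (k : ℕ) (E : Finset V → Prop) [DecidablePred E] :
    DecidablePred (complE k E) := fun S =>
  inferInstanceAs (Decidable (S.card = k ∧ ¬ E S))

/-- The Ramsey property: every coloring of the `(k-1)`-subsets of an `n`-set with `s`
colors contains a `k`-set all of whose `(k-1)`-subsets receive the same color. -/
def RamseyProp (s k n : ℕ) : Prop :=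
  ∀ c : Finset (Fin n) → ℕ,
    (∀ A : Finset (Fin n), A.card = k - 1 → c A < s) →
    ∃ T : Finset (Fin n), T.card = k ∧
      ∀ A ⊆ T, A.card = k - 1 → ∀ B ⊆ T, B.card = k - 1 → c A = c B

/-- The Ramsey number `R_s(k)`: the minimum `N` such that `RamseyProp s k n` holds
for every `n ≥ N`. -/
noncomputable def ramseyNumber (s k : ℕ) : ℕ :=
  sInf {N | ∀ n, N ≤ n → RamseyProp s k n}

open Finset

universe u

theorem myRamseyAux : ∀ (r s m : ℕ), ∃ N : ℕ,
    ∀ (V : Type u) [LinearOrder V] (A : Finset V) (c : Finset V → ℕ),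
      N ≤ A.card → (∀ B ⊆ A, B.card = r → c B < s) →
      ∃ T ⊆ A, T.card = m ∧
        ∀ B ⊆ T, B.card = r → ∀ B' ⊆ T, B'.card = r → c B = c B' := by
  intro r
  induction r with
  | zero =>
    intro s m
    refine ⟨m, fun V _ A c hA _ => ?_⟩
    obtain ⟨T, hTA, hTcard⟩ := A.exists_subset_card_eq hA
    refine ⟨T, hTA, hTcard, fun B _ hB B' _ hB' => ?_⟩
    rw [Finset.card_eq_zero.mp hB, Finset.card_eq_zero.mp hB']
  | succ r IH =>
    intro s m
    choose Nr hNr using IH s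
    let g : ℕ → ℕ := fun j => Nat.rec r (fun _ acc => Nr (max acc r) + 1) j
    have hgs : ∀ j, g (j + 1) = Nr (max (g j) r) + 1 := fun _ => rfl
    refine ⟨g (s * m + 1), fun V _ A c hA hbound => ?_⟩
    have inner : ∀ j, ∀ D ⊆ A, g j ≤ D.card →
        ∃ P ⊆ D, P.card = j ∧ ∃ φ : V → ℕ, (∀ x ∈ P, φ x < s) ∧
          ∀ x ∈ P, ∀ B ⊆ P, (∀ y ∈ B, x < y) → B.card = r → c (insert x B) = φ x := by
      intro j
      induction j with
      | zero =>
        intro D _ _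
        exact ⟨∅, empty_subset _, card_empty, fun _ => 0, by simp, by simp⟩
      | succ j ihj =>
        intro D hDA hDcard
        rw [hgs] at hDcard
        have hDne : D.Nonempty := card_pos.1 (lt_of_lt_of_le (Nat.succ_pos _) hDcard)
        set x := D.min' hDne with hxdef
        have hxD : x ∈ D := D.min'_mem hDne
        set D' := D.erase x with hD'def
        have hD'card : Nr (max (g j) r) ≤ D'.card := by
          rw [hD'def, card_erase_of_mem hxD]; omega
        have hxD' : x ∉ D' := notMem_erase _ _
        obtain ⟨W, hWD', hWcard, hWmono⟩ :=
          hNr (max (g j) r) V D' (fun B => c (insert x B)) hD'card (by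
            intro B hBD' hBcard
            have hxB : x ∉ B := fun h => hxD' (hBD' h)
            apply hbound _ (insert_subset (hDA hxD) (hBD'.trans ((erase_subset _ _).trans hDA)))
            rw [card_insert_of_notMem hxB, hBcard])
        have hWD : W ⊆ D := hWD'.trans (erase_subset _ _)
        obtain ⟨P', hP'W, hP'card, φ', hφ's, hKey'⟩ :=
          ihj W (hWD.trans hDA) (by rw [hWcard]; exact le_max_left _ _)
        obtain ⟨B₀, hB₀W, hB₀card⟩ := W.exists_subset_card_eq
          (le_trans (le_max_right (g j) r) hWcard.ge)
        have hxW : x ∉ W := fun h => hxD' (hWD' h)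
        have hxP' : x ∉ P' := fun h => hxW (hP'W h)
        refine ⟨insert x P', insert_subset hxD (hP'W.trans hWD), by
            rw [card_insert_of_notMem hxP', hP'card], ?_⟩
        refine ⟨fun z => if z = x then c (insert x B₀) else φ' z, ?_, ?_⟩
        · intro z hz
          dsimp only
          rcases mem_insert.1 hz with rfl | hz'
          · rw [if_pos rfl]
            have hxB₀ : x ∉ B₀ := fun h => hxW (hB₀W h)
            apply hbound _ (insert_subset (hDA hxD) ((hB₀W.trans hWD).trans hDA))
            rw [card_insert_of_notMem hxB₀, hB₀card]
          · rw [if_neg (fun h : z = x => hxP' (h ▸ hz'))]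
            exact hφ's z hz'
        · intro x' hx' B hBP hlt hBcard
          dsimp only
          rcases mem_insert.1 hx' with rfl | hx'P'
          · rw [if_pos rfl]
            have hBW : B ⊆ W := by
              intro y hy
              rcases mem_insert.1 (hBP hy) with rfl | hyP'
              · exact absurd (hlt _ hy) (lt_irrefl _)
              · exact hP'W hyP'
            exact hWmono B hBW hBcard B₀ hB₀W hB₀card
          · have hx'x : x' ≠ x := fun h : x' = x => hxP' (h ▸ hx'P')
            rw [if_neg hx'x]
            have hxx' : x < x' := lt_of_le_of_ne (D.min'_le x' (hWD (hP'W hx'P'))) (Ne.symm hx'x)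
            have hBP' : B ⊆ P' := by
              intro y hy
              rcases mem_insert.1 (hBP hy) with rfl | hyP'
              · exact absurd (hxx'.trans (hlt _ hy)) (lt_irrefl _)
              · exact hyP'
            exact hKey' x' hx'P' B hBP' hlt hBcard
    obtain ⟨P, hPA, hPcard, φ, hφs, hKey⟩ := inner (s * m + 1) A subset_rfl hA
    have maps : ∀ x ∈ P, φ x ∈ Finset.range s := fun x hx => mem_range.2 (hφs x hx)
    have hlt : (Finset.range s).card * m < P.card := by rw [card_range, hPcard]; omega
    obtain ⟨col, -, hcol⟩ := exists_lt_card_fiber_of_mul_lt_card_of_maps_to maps hlt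
    obtain ⟨T, hTsub, hTcard⟩ := (P.filter (fun x => φ x = col)).exists_subset_card_eq hcol.le
    have hTP : T ⊆ P := hTsub.trans (filter_subset _ _)
    refine ⟨T, hTP.trans hPA, hTcard, ?_⟩
    have key : ∀ C ⊆ T, C.card = r + 1 → c C = col := by
      intro C hCT hCcard
      have hCne : C.Nonempty := card_pos.1 (by omega)
      set y := C.min' hCne with hydef
      have hyC : y ∈ C := C.min'_mem hCne
      have hyP : y ∈ P := hTP (hCT hyC)
      have h1 : c (insert y (C.erase y)) = φ y := by
        apply hKey y hyP (C.erase y) ((erase_subset _ _).trans (hCT.trans hTP))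
        · intro z hz
          exact lt_of_le_of_ne (C.min'_le z ((erase_subset _ _) hz))
            (Ne.symm (mem_erase.1 hz).1)
        · rw [card_erase_of_mem hyC, hCcard]; omega
      rw [insert_erase hyC] at h1
      rw [h1]
      exact (mem_filter.1 (hTsub (hCT hyC))).2
    intro B hBT hB B' hB'T hB'
    rw [key B hBT hB, key B' hB'T hB']

theorem myRamseyExists (s k : ℕ) : ∃ N, ∀ n, N ≤ n → RamseyProp s k n := by
  obtain ⟨N, hN⟩ := myRamseyAux (k - 1) s k
  refine ⟨N, fun n hn c hc => ?_⟩
  obtain ⟨T, _, hTcard, hmono⟩ := hN (Fin n) univ c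
    (by rw [card_univ, Fintype.card_fin]; exact hn) (fun B _ hB => hc B hB)
  exact ⟨T, hTcard, hmono⟩

theorem stmt8' {V : Type*} [Fintype V] [DecidableEq V] (k : ℕ)
    (E : Finset V → Prop) [DecidablePred E]
    (huni : ∀ e, E e → e.card = k)
    (c c' : Finset V → ℕ)
    (hc : ∀ A : Finset V, A.card = k - 1 → c A < cliqueNumOn k Finset.univ E + 2 - k)
    (hcproper : ∀ e, E e →
      ∃ A ⊆ e, A.card = k - 1 ∧ ∃ B ⊆ e, B.card = k - 1 ∧ c A ≠ c B)
    (hc' : ∀ A : Finset V, A.card = k - 1 →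
      c' A < cliqueNumOn k Finset.univ (complE k E) + 2 - k)
    (hc'proper : ∀ e, complE k E e →
      ∃ A ⊆ e, A.card = k - 1 ∧ ∃ B ⊆ e, B.card = k - 1 ∧ c' A ≠ c' B) :
    Fintype.card V <
      ramseyNumber ((cliqueNumOn k Finset.univ (complE k E) + 2 - k) *
        (cliqueNumOn k Finset.univ E + 2 - k)) k := by
  set w := cliqueNumOn k Finset.univ E + 2 - k with hw
  set a := cliqueNumOn k Finset.univ (complE k E) + 2 - k with ha
  obtain ⟨N, hN⟩ := myRamseyExists (a * w) k
  have hSne : Set.Nonempty {M | ∀ n, M ≤ n → RamseyProp (a * w) k n} := ⟨N, hN⟩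
  rw [ramseyNumber]
  by_contra hcon
  push_neg at hcon
  have hRam : RamseyProp (a * w) k (Fintype.card V) := Nat.sInf_mem hSne _ hcon
  set n := Fintype.card V
  set e := Fintype.equivFin V with he
  set f : Finset (Fin n) → Finset V := fun A => A.map e.symm.toEmbedding with hf
  have hfA : ∀ A : Finset V, f (A.map e.toEmbedding) = A := by
    intro A; ext v; simp [hf]
  have hfcard : ∀ A : Finset (Fin n), (f A).card = A.card := fun A => card_map _
  obtain ⟨T, hTcard, hmono⟩ := hRam (fun A => c' (f A) * w + c (f A)) (by
    intro A hA
    have h1 : c (f A) < w := hc _ (by rw [hfcard, hA])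
    have h2 : c' (f A) < a := hc' _ (by rw [hfcard, hA])
    calc c' (f A) * w + c (f A) < c' (f A) * w + w := by omega
    _ = (c' (f A) + 1) * w := by ring
    _ ≤ a * w := Nat.mul_le_mul_right _ h2)
  set T' := f T with hT'
  have hT'card : T'.card = k := by rw [hT', hfcard, hTcard]
  have hsub : ∀ A : Finset V, A ⊆ T' → A.map e.toEmbedding ⊆ T := by
    intro A hA x hx
    simp only [Finset.mem_map, Equiv.coe_toEmbedding] at hx
    obtain ⟨v, hv, rfl⟩ := hx
    have := hA hv
    simp only [hT', hf, Finset.mem_map, Equiv.coe_toEmbedding] at this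
    obtain ⟨t, ht, rfl⟩ := this
    simpa using ht
  have hAB : ∀ A ⊆ T', A.card = k - 1 → ∀ B ⊆ T', B.card = k - 1 →
      c' A * w + c A = c' B * w + c B := by
    intro A hA hAc B hB hBc
    have := hmono (A.map e.toEmbedding) (hsub A hA) (by rw [card_map, hAc])
      (B.map e.toEmbedding) (hsub B hB) (by rw [card_map, hBc])
    simpa only [hfA] using this
  have modeq : ∀ X : Finset V, X.card = k - 1 → (c' X * w + c X) % w = c X :=
    fun X hX => by rw [Nat.mul_add_mod', Nat.mod_eq_of_lt (hc X hX)]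
  by_cases hE : E T'
  · obtain ⟨A, hA, hAc, B, hB, hBc, hne⟩ := hcproper T' hE
    apply hne
    have heq := hAB A hA hAc B hB hBc
    have := congrArg (· % w) heq
    simpa only [modeq A hAc, modeq B hBc] using this
  · obtain ⟨A, hA, hAc, B, hB, hBc, hne⟩ := hc'proper T' ⟨hT'card, hE⟩
    apply hne
    have heq := hAB A hA hAc B hB hBc
    have hcc : c A = c B := by
      have := congrArg (· % w) heq
      simpa only [modeq A hAc, modeq B hBc] using this
    have hwpos : 0 < w := lt_of_le_of_lt (Nat.zero_le _) (hc A hAc)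
    rw [hcc] at heq
    exact Nat.eq_of_mul_eq_mul_right hwpos (Nat.add_right_cancel heq)


/-- If a `k`-uniform hypergraph `G` admits a proper coloring of the `(k-1)`-subsets of
its vertex set with `ω(G)-k+2` colors (no edge has all its `(k-1)`-subsets
monochromatic), and its complement admits such a proper coloring with `α(G)-k+2`
colors, then `|V(G)| < R_{(α(G)-k+2)(ω(G)-k+2)}(k)`. -/
theorem stmt8 {V : Type*} [Fintype V] [DecidableEq V] (k : ℕ)
    (E : Finset V → Prop) [DecidablePred E]
    (huni : ∀ e, E e → e.card = k)
    (c c' : Finset V → ℕ)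
    (hc : ∀ A : Finset V, A.card = k - 1 → c A < cliqueNumOn k Finset.univ E + 2 - k)
    (hcproper : ∀ e, E e →
      ∃ A ⊆ e, A.card = k - 1 ∧ ∃ B ⊆ e, B.card = k - 1 ∧ c A ≠ c B)
    (hc' : ∀ A : Finset V, A.card = k - 1 →
      c' A < cliqueNumOn k Finset.univ (complE k E) + 2 - k)
    (hc'proper : ∀ e, complE k E e →
      ∃ A ⊆ e, A.card = k - 1 ∧ ∃ B ⊆ e, B.card = k - 1 ∧ c' A ≠ c' B) :
    Fintype.card V <
      ramseyNumber ((cliqueNumOn k Finset.univ (complE k E) + 2 - k) *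
        (cliqueNumOn k Finset.univ E + 2 - k)) k := by
  exact stmt8' k E huni c c' hc hcproper hc' hc'proper
end

section
/- Let G be a graph of the following form: H is a triangle-free graph with chromatic number greater than 4, v is a new vertex adjacent exactly to A ⊆ V(H), and G is obtained from H plus v by switching (toggling adjacency of) all pairs {x,y} with x ∈ A and y ∈ V(H)\A. Then the link of v in the cocycle co(G) is isomorphic to H. -/
/-!
The triple `{v, x, y}` spans `[x ∈ A] + [y ∈ A] + [xy ∈ G]` edges of `G`. Switching toggles
`xy` exactly when `x` and `y` lie on different sides of `A`, i.e. exactly when the first two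
terms have odd sum, so the parity of the total is that of `[xy ∈ H]`.
-/

open Finset

/-- The number of edges of the graph `H` inside the vertex set `T`. -/
def edgeCount {V : Type*} [DecidableEq V] (H : SimpleGraph V) [DecidableRel H.Adj]
    (T : Finset V) : ℕ :=
  ((T.powersetCard 2).filter fun P => ∀ x ∈ P, ∀ y ∈ P, x ≠ y → H.Adj x y).card

/-- `T` is an edge of the 3-uniform hypergraph `co(H)`. -/
def coEdge {V : Type*} [DecidableEq V] (H : SimpleGraph V) [DecidableRel H.Adj]
    (T : Finset V) : Prop :=
  T.card = 3 ∧ Odd (edgeCount H T)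

/-- The graph obtained from `H` by adding a new vertex `none` adjacent exactly to `A`,
and switching (toggling) the adjacency of all pairs `{x,y}` with `x ∈ A`, `y ∉ A`. -/
def switched {W : Type*} (H : SimpleGraph W) (A : Set W) : SimpleGraph (Option W) where
  Adj x y :=
    match x, y with
    | none, none => False
    | none, some b => b ∈ A
    | some a, none => a ∈ A
    | some a, some b =>
        ((a ∈ A ↔ b ∈ A) ∧ H.Adj a b) ∨ (¬(a ∈ A ↔ b ∈ A) ∧ ¬H.Adj a b ∧ a ≠ b)
  symm := by
    constructor
    intro x y h
    cases x <;> cases y <;> simp_all [SimpleGraph.adj_comm] <;> tauto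
  loopless := by
    constructor
    intro x h
    cases x <;> simp_all

instance {W : Type*} [DecidableEq W] (H : SimpleGraph W) [DecidableRel H.Adj] (A : Set W)
    [DecidablePred (· ∈ A)] : DecidableRel (switched H A).Adj := fun x y =>
  match x, y with
  | none, none => inferInstanceAs (Decidable False)
  | none, some b => inferInstanceAs (Decidable (b ∈ A))
  | some a, none => inferInstanceAs (Decidable (a ∈ A))
  | some a, some b => inferInstanceAs (Decidable (((a ∈ A ↔ b ∈ A) ∧ H.Adj a b) ∨
      (¬(a ∈ A ↔ b ∈ A) ∧ ¬H.Adj a b ∧ a ≠ b)))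

theorem Finset.powersetCard_two_triple {V : Type*} [DecidableEq V] {a b c : V}
    (hab : a ≠ b) (hac : a ≠ c) (hbc : b ≠ c) :
    ({a, b, c} : Finset V).powersetCard 2 = {{a, b}, {a, c}, {b, c}} := by
  ext P
  simp only [mem_powersetCard, card_eq_two, mem_insert, mem_singleton]
  constructor
  · rintro ⟨hsub, u, w, huw, rfl⟩
    have hu := hsub (mem_insert_self u {w})
    have hw := hsub (mem_insert_of_mem (mem_singleton_self w))
    simp only [mem_insert, mem_singleton] at hu hw
    rcases hu with rfl | rfl | rfl <;> rcases hw with rfl | rfl | rfl <;>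
      simp_all [pair_comm]
  · rintro (rfl | rfl | rfl)
    · exact ⟨by simp, a, b, hab, rfl⟩
    · exact ⟨by simp, a, c, hac, rfl⟩
    · exact ⟨by simp, b, c, hbc, rfl⟩

theorem SimpleGraph.forall_pair_adj_iff {V : Type*} [DecidableEq V] (G : SimpleGraph V)
    {u w : V} (huw : u ≠ w) :
    (∀ x ∈ ({u, w} : Finset V), ∀ y ∈ ({u, w} : Finset V), x ≠ y → G.Adj x y) ↔ G.Adj u w := by
  refine ⟨fun h => h u (by simp) w (by simp) huw, fun h x hx y hy hxy => ?_⟩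
  simp only [mem_insert, mem_singleton] at hx hy
  rcases hx with rfl | rfl <;> rcases hy with rfl | rfl
  exacts [absurd rfl hxy, h, h.symm, absurd rfl hxy]

theorem edgeCount_triple {V : Type*} [DecidableEq V] (G : SimpleGraph V) [DecidableRel G.Adj]
    {a b c : V} (hab : a ≠ b) (hac : a ≠ c) (hbc : b ≠ c) :
    edgeCount G {a, b, c} =
      (if G.Adj a b then 1 else 0) + (if G.Adj a c then 1 else 0) +
        (if G.Adj b c then 1 else 0) := by
  have hab_ac : ({a, b} : Finset V) ≠ {a, c} := fun h => by
    simpa [hab.symm, hbc] using congrArg (b ∈ ·) h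
  have hab_bc : ({a, b} : Finset V) ≠ {b, c} := fun h => by
    simpa [hab, hac] using congrArg (a ∈ ·) h
  have hac_bc : ({a, c} : Finset V) ≠ {b, c} := fun h => by
    simpa [hab, hac] using congrArg (a ∈ ·) h
  rw [edgeCount, powersetCard_two_triple hab hac hbc, card_filter,
    sum_insert (by simp [hab_ac, hab_bc]), sum_insert (by simp [hac_bc]), sum_singleton, add_assoc]
  simp only [G.forall_pair_adj_iff hab, G.forall_pair_adj_iff hac, G.forall_pair_adj_iff hbc]

/-- `(p ↔ q) ↔ r` holds exactly when an odd number of `p`, `q`, `r` hold. -/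
theorem odd_edgeCount_triple_iff {V : Type*} [DecidableEq V] (G : SimpleGraph V)
    [DecidableRel G.Adj] {a b c : V} (hab : a ≠ b) (hac : a ≠ c) (hbc : b ≠ c) :
    Odd (edgeCount G {a, b, c}) ↔ ((G.Adj a b ↔ G.Adj a c) ↔ G.Adj b c) := by
  rw [edgeCount_triple G hab hac hbc]
  by_cases h₁ : G.Adj a b <;> by_cases h₂ : G.Adj a c <;> by_cases h₃ : G.Adj b c <;>
    simp [h₁, h₂, h₃, Nat.odd_iff]

theorem switched_adj_some_some_iff {W : Type*} (H : SimpleGraph W) (A : Set W) {a b : W}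
    (hab : a ≠ b) :
    (switched H A).Adj (some a) (some b) ↔ ((a ∈ A ↔ b ∈ A) ↔ H.Adj a b) := by
  change ((a ∈ A ↔ b ∈ A) ∧ H.Adj a b) ∨ (¬(a ∈ A ↔ b ∈ A) ∧ ¬H.Adj a b ∧ a ≠ b) ↔ _
  tauto

theorem stmt11_general {W : Type*} [DecidableEq W]
    (H : SimpleGraph W) [DecidableRel H.Adj] (A : Set W) [DecidablePred (· ∈ A)] :
    ∀ x y : W, x ≠ y →
      (coEdge (switched H A) {none, some x, some y} ↔ H.Adj x y) := by
  intro x y hxy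
  have hvx : (none : Option W) ≠ some x := Option.some_ne_none x |>.symm
  have hvy : (none : Option W) ≠ some y := Option.some_ne_none y |>.symm
  have hxy' : some x ≠ some y := Option.some_injective _ |>.ne hxy
  have hcard : ({none, some x, some y} : Finset (Option W)).card = 3 :=
    card_triple_eq_three_iff.mpr ⟨hvx, hvy, hxy'⟩
  rw [coEdge, odd_edgeCount_triple_iff _ hvx hvy hxy', switched_adj_some_some_iff H A hxy]
  change _ ∧ ((x ∈ A ↔ y ∈ A) ↔ _) ↔ _
  tauto

/-- Let `H` be a triangle-free graph with chromatic number greater than 4, let `v` be a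
new vertex adjacent exactly to `A ⊆ V(H)`, and let `G` be obtained by switching all
pairs between `A` and `V(H) \ A`. Then the link of `v` in the cocycle `co(G)` is
(isomorphic to) `H`: for distinct `x, y ∈ V(H)`, the triple `{v, x, y}` is an edge of
`co(G)` iff `xy` is an edge of `H`. -/
theorem stmt11 {W : Type*} [Fintype W] [DecidableEq W]
    (H : SimpleGraph W) [DecidableRel H.Adj] (A : Set W) [DecidablePred (· ∈ A)]
    (htf : H.CliqueFree 3) (hchrom : 4 < H.chromaticNumber) :
    ∀ x y : W, x ≠ y →
      (coEdge (switched H A) {none, some x, some y} ↔ H.Adj x y) :=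
  stmt11_general H A
end

section
/- Let H be a triangle-free graph. Then the cocycle co(H) contains no K_5^3, i.e., no 5 vertices such that every triple among them spans an odd number of edges of H. -/
open Finset

lemma edgeCount_triple_s12 {V : Type*} [DecidableEq V] (H : SimpleGraph V) [DecidableRel H.Adj]
    {x y z : V} (hxy : x ≠ y) (hxz : x ≠ z) (hyz : y ≠ z) :
    edgeCount H {x, y, z} =
      (if H.Adj x y then 1 else 0) + (if H.Adj x z then 1 else 0) +
        (if H.Adj y z then 1 else 0) := by
  have hp : ({x, y, z} : Finset V).powersetCard 2 = {{x, y}, {x, z}, {y, z}} := by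
    ext P
    simp only [mem_powersetCard, mem_insert, mem_singleton]
    constructor
    · rintro ⟨hsub, hcard⟩
      obtain ⟨a, b, hab, rfl⟩ := Finset.card_eq_two.mp hcard
      have ha : a ∈ ({x, y, z} : Finset V) := hsub (by simp)
      have hb : b ∈ ({x, y, z} : Finset V) := hsub (by simp)
      simp only [mem_insert, mem_singleton] at ha hb
      rcases ha with rfl | rfl | rfl <;> rcases hb with rfl | rfl | rfl <;>
        simp_all [Finset.pair_comm]
    · rintro (rfl | rfl | rfl) <;>
        refine ⟨by intro t ht; simp at ht ⊢; tauto, ?_⟩ <;>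
        [exact Finset.card_pair hxy; exact Finset.card_pair hxz; exact Finset.card_pair hyz]
  have n1 : ({x, y} : Finset V) ≠ {x, z} := by
    intro h
    have : y ∈ ({x, z} : Finset V) := h ▸ (by simp)
    simp only [mem_insert, mem_singleton] at this
    rcases this with rfl | rfl
    · exact hxy rfl
    · exact hyz rfl
  have n2 : ({x, y} : Finset V) ≠ {y, z} := by
    intro h
    have : x ∈ ({y, z} : Finset V) := h ▸ (by simp)
    simp only [mem_insert, mem_singleton] at this
    rcases this with rfl | rfl
    · exact hxy rfl
    · exact hxz rfl
  have n3 : ({x, z} : Finset V) ≠ {y, z} := by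
    intro h
    have : x ∈ ({y, z} : Finset V) := h ▸ (by simp)
    simp only [mem_insert, mem_singleton] at this
    rcases this with rfl | rfl
    · exact hxy rfl
    · exact hxz rfl
  have h1 : (∀ a ∈ ({x, y} : Finset V), ∀ b ∈ ({x, y} : Finset V), a ≠ b → H.Adj a b)
      ↔ H.Adj x y := by
    constructor
    · intro h; exact h x (by simp) y (by simp) hxy
    · intro h a ha b hb hab
      simp only [mem_insert, mem_singleton] at ha hb
      rcases ha with rfl | rfl <;> rcases hb with rfl | rfl <;>
        first | exact absurd rfl hab | exact h | exact h.symm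
  have h2 : (∀ a ∈ ({x, z} : Finset V), ∀ b ∈ ({x, z} : Finset V), a ≠ b → H.Adj a b)
      ↔ H.Adj x z := by
    constructor
    · intro h; exact h x (by simp) z (by simp) hxz
    · intro h a ha b hb hab
      simp only [mem_insert, mem_singleton] at ha hb
      rcases ha with rfl | rfl <;> rcases hb with rfl | rfl <;>
        first | exact absurd rfl hab | exact h | exact h.symm
  have h3 : (∀ a ∈ ({y, z} : Finset V), ∀ b ∈ ({y, z} : Finset V), a ≠ b → H.Adj a b)
      ↔ H.Adj y z := by
    constructor
    · intro h; exact h y (by simp) z (by simp) hyz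
    · intro h a ha b hb hab
      simp only [mem_insert, mem_singleton] at ha hb
      rcases ha with rfl | rfl <;> rcases hb with rfl | rfl <;>
        first | exact absurd rfl hab | exact h | exact h.symm
  rw [edgeCount, hp, Finset.card_filter]
  rw [Finset.sum_insert (by simp [n1, n2]), Finset.sum_insert (by simp [n3]),
    Finset.sum_singleton]
  simp only [h1, h2, h3]
  exact (Nat.add_assoc _ _ _).symm

/-- If `H` is a triangle-free graph then the cocycle `co(H)` contains no `K_5^3`:
there are no 5 vertices such that every triple among them spans an odd number of
edges of `H`. -/
theorem stmt12 {V : Type*} [DecidableEq V] (H : SimpleGraph V) [DecidableRel H.Adj]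
    (htf : H.CliqueFree 3) :
    ¬ ∃ S : Finset V, S.card = 5 ∧ ∀ T ⊆ S, T.card = 3 → Odd (edgeCount H T) := by
  rintro ⟨S, hS5, hodd⟩
  obtain ⟨v0, hv0⟩ : S.Nonempty := Finset.card_pos.mp (by omega)
  set S' := S.erase v0 with hS'
  have hS'4 : S'.card = 4 := by rw [hS', Finset.card_erase_of_mem hv0, hS5]
  have pairOdd : ∀ a ∈ S', ∀ b ∈ S', a ≠ b →
      Odd ((if H.Adj v0 a then 1 else 0) + (if H.Adj v0 b then 1 else 0) +
        (if H.Adj a b then 1 else 0)) := by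
    intro a ha b hb hab
    have hva : v0 ≠ a := (Finset.ne_of_mem_erase ha).symm
    have hvb : v0 ≠ b := (Finset.ne_of_mem_erase hb).symm
    have hsub : ({v0, a, b} : Finset V) ⊆ S := by
      intro t ht
      simp only [mem_insert, mem_singleton] at ht
      rcases ht with rfl | rfl | rfl
      · exact hv0
      · exact Finset.mem_of_mem_erase ha
      · exact Finset.mem_of_mem_erase hb
    have hcard : ({v0, a, b} : Finset V).card = 3 := by
      rw [Finset.card_insert_of_notMem (by simp [hva, hvb]), Finset.card_pair hab]
    have := hodd _ hsub hcard
    rwa [edgeCount_triple_s12 H hva hvb hab] at this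
  have noAdjPair : ∀ a ∈ S', ∀ b ∈ S', a ≠ b → ¬(H.Adj v0 a ∧ H.Adj v0 b) := by
    rintro a ha b hb hab ⟨h1, h2⟩
    have hO := pairOdd a ha b hb hab
    by_cases hab' : H.Adj a b
    · exact htf {v0, a, b} (SimpleGraph.is3Clique_triple_iff.mpr ⟨h1, h2, hab'⟩)
    · simp [h1, h2, hab', Nat.odd_iff] at hO
  have hA : (S'.filter fun x => H.Adj v0 x).card ≤ 1 := by
    by_contra h
    push_neg at h
    obtain ⟨a, ha, b, hb, hab⟩ := Finset.one_lt_card.mp h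
    simp only [Finset.mem_filter] at ha hb
    exact noAdjPair a ha.1 b hb.1 hab ⟨ha.2, hb.2⟩
  have hsplit := Finset.card_filter_add_card_filter_not
    (s := S') (p := fun x => H.Adj v0 x)
  have hB : 3 ≤ (S'.filter fun x => ¬ H.Adj v0 x).card := by omega
  obtain ⟨t, htB, ht3⟩ := Finset.exists_subset_card_eq hB
  obtain ⟨a, b, c, hab, hac, hbc, rfl⟩ := Finset.card_eq_three.mp ht3
  have ha := htB (by simp : a ∈ ({a, b, c} : Finset V))
  have hb := htB (by simp : b ∈ ({a, b, c} : Finset V))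
  have hc := htB (by simp : c ∈ ({a, b, c} : Finset V))
  simp only [Finset.mem_filter] at ha hb hc
  have adjab : H.Adj a b := by
    have hO := pairOdd a ha.1 b hb.1 hab
    by_cases h : H.Adj a b
    · exact h
    · simp [ha.2, hb.2, h, Nat.odd_iff] at hO
  have adjac : H.Adj a c := by
    have hO := pairOdd a ha.1 c hc.1 hac
    by_cases h : H.Adj a c
    · exact h
    · simp [ha.2, hc.2, h, Nat.odd_iff] at hO
  have adjbc : H.Adj b c := by
    have hO := pairOdd b hb.1 c hc.1 hbc
    by_cases h : H.Adj b c
    · exact h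
    · simp [hb.2, hc.2, h, Nat.odd_iff] at hO
  exact htf {a, b, c} (SimpleGraph.is3Clique_triple_iff.mpr ⟨adjab, adjac, adjbc⟩)
end

section
/- Let G be a 3-uniform cocycle and suppose that for every vertex v, the link graph lk_G(v) can be properly vertex-colored with ω(G)-1 colors. Then the vertices of G can be partitioned into at most ω(G)-1 independent sets (sets containing no edge of G), provided ω(G) ≥ 2 and V(G) is nonempty. -/
open Finset

/-- A 3-uniform hypergraph is a cocycle if every 4 vertices span an even number of
edges. -/
def IsCocycle {V : Type*} [DecidableEq V] (E : Finset V → Prop) [DecidablePred E] :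
    Prop :=
  ∀ S : Finset V, S.card = 4 → Even ((S.powersetCard 3).filter E).card

/-- Let `G` be a 3-uniform cocycle with `ω(G) ≥ 2` and nonempty vertex set, and suppose
that for every vertex `v` the link graph `lk_G(v)` is properly vertex-colorable with
`ω(G)-1` colors. Then the vertices of `G` can be partitioned into at most `ω(G)-1`
independent sets. -/
theorem stmt13 {V : Type*} [Fintype V] [DecidableEq V]
    (E : Finset V → Prop) [DecidablePred E]
    (huni : ∀ e, E e → e.card = 3)
    (hco : IsCocycle E)
    (hω : 2 ≤ cliqueNumOn 3 Finset.univ E)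
    (hne : Nonempty V)
    (hlink : ∀ v : V, ∃ f : V → ℕ,
      (∀ x : V, f x < cliqueNumOn 3 Finset.univ E - 1) ∧
      ∀ a b : V, a ≠ b → E (insert v {a, b}) → f a ≠ f b) :
    ∃ g : V → ℕ, (∀ x : V, g x < cliqueNumOn 3 Finset.univ E - 1) ∧
      ∀ T : Finset V, E T → ∃ x ∈ T, ∃ y ∈ T, g x ≠ g y := by
  obtain ⟨v⟩ := hne
  obtain ⟨f, hf1, hf2⟩ := hlink v
  refine ⟨f, hf1, ?_⟩
  intro T hT
  by_contra hcon
  push_neg at hcon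
  have hT3 := huni T hT
  have key : ∃ p ∈ T, ∃ q ∈ T, p ≠ q ∧ E (insert v {p, q}) := by
    by_cases hv : v ∈ T
    · have h2 : (T.erase v).card = 2 := by
        rw [Finset.card_erase_of_mem hv, hT3]
      obtain ⟨p, q, hpq, hE⟩ := Finset.card_eq_two.mp h2
      have hpT : p ∈ T :=
        (Finset.mem_erase.mp (hE ▸ Finset.mem_insert_self p {q})).2
      have hqT : q ∈ T :=
        (Finset.mem_erase.mp (hE ▸ (by simp : q ∈ ({p, q} : Finset V)))).2
      refine ⟨p, hpT, q, hqT, hpq, ?_⟩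
      have heq : insert v ({p, q} : Finset V) = T := by
        rw [← hE, Finset.insert_erase hv]
      rwa [heq]
    · set S := insert v T with hS
      have hS4 : S.card = 4 := by
        rw [hS, Finset.card_insert_of_notMem hv, hT3]
      have heven := hco S hS4
      have hTmem : T ∈ (S.powersetCard 3).filter E := by
        simp [Finset.mem_powersetCard, hT3, hT, hS, Finset.subset_insert]
      have h1lt : 1 < ((S.powersetCard 3).filter E).card := by
        rcases heven with ⟨k, hk⟩
        have : 0 < ((S.powersetCard 3).filter E).card :=
          Finset.card_pos.mpr ⟨T, hTmem⟩
        omega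
      obtain ⟨S', hS'mem, hS'ne⟩ := Finset.exists_mem_ne h1lt T
      rw [Finset.mem_filter, Finset.mem_powersetCard] at hS'mem
      obtain ⟨⟨hS'sub, hS'3⟩, hES'⟩ := hS'mem
      have hvS' : v ∈ S' := by
        by_contra hvn
        apply hS'ne
        apply Finset.eq_of_subset_of_card_le
        · intro x hx
          rcases Finset.mem_insert.mp (hS'sub hx) with h | h
          · exact absurd (h ▸ hx) hvn
          · exact h
        · omega
      have h2 : (S'.erase v).card = 2 := by
        rw [Finset.card_erase_of_mem hvS', hS'3]
      obtain ⟨p, q, hpq, hE2⟩ := Finset.card_eq_two.mp h2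
      have hsubT : S'.erase v ⊆ T := by
        intro x hx
        obtain ⟨hxv, hxS'⟩ := Finset.mem_erase.mp hx
        rcases Finset.mem_insert.mp (hS'sub hxS') with h | h
        · exact absurd h hxv
        · exact h
      have hpT : p ∈ T := hsubT (hE2 ▸ Finset.mem_insert_self p {q})
      have hqT : q ∈ T := hsubT (hE2 ▸ (by simp : q ∈ ({p, q} : Finset V)))
      refine ⟨p, hpT, q, hqT, hpq, ?_⟩
      have heq : insert v ({p, q} : Finset V) = S' := by
        rw [← hE2, Finset.insert_erase hvS']
      rwa [heq]
  obtain ⟨p, hpT, q, hqT, hpq, hEpq⟩ := key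
  exact hf2 p q hpq hEpq (hcon p hpT q hqT)
end

section
/- Let (G, v) be a pre-odd-hole centered at v with sectors P_1,…,P_k. Then the graph G^+(v) (the link of v in co(G)) contains an odd hole, namely the cyclic sequence obtained by traversing the paths P_1,…,P_k in order is an induced cycle of odd length at least 5 in G^+(v). -/
open Finset

/-- Adjacency in `G⁺(v)`, the link of `v` in `co(G)`, for vertices `x, y` other than `v`. -/
def plusAdj {V : Type*} (G : SimpleGraph V) (v x y : V) : Prop :=
  (G.Adj v x ∧ G.Adj v y ∧ G.Adj x y) ∨
  (¬G.Adj v x ∧ ¬G.Adj v y ∧ G.Adj x y) ∨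
  (G.Adj v x ∧ ¬G.Adj v y ∧ ¬G.Adj x y) ∨
  (¬G.Adj v x ∧ G.Adj v y ∧ ¬G.Adj x y)

/-!
Read the sectors `P 0, …, P (k-1)` one after the other, each along its path; this lists
`V(G) \ {v}` as a cyclic sequence of odd length `|V(G)| - 1`. Two vertices on the same side of
`N(v)` (same sector parity) are adjacent in `G⁺(v)` iff they are adjacent in `G`, and there the
only edges of `G` are the path edges. Two vertices on opposite sides are adjacent in `G⁺(v)` iff
they are non-adjacent in `G`, and since `k` is even, the only such non-edges are the joints
between the last vertex of a sector and the first vertex of the next one. So the edges of `G⁺(v)`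
are exactly the pairs that are consecutive in the cyclic sequence.
-/

lemma Nat.succ_mod_cases {k i : ℕ} (hi : i < k) :
    (i + 1) % k = i + 1 ∧ i + 1 < k ∨ (i + 1) % k = 0 ∧ i + 1 = k := by
  rcases (Nat.succ_le_of_lt hi).lt_or_eq with h | h
  · exact .inl ⟨Nat.mod_eq_of_lt h, h⟩
  · exact .inr ⟨h ▸ Nat.mod_self _, h⟩

lemma Nat.succ_mod_ne_self {k i : ℕ} (hk : 2 ≤ k) (hi : i < k) : (i + 1) % k ≠ i := by
  rcases Nat.succ_mod_cases hi with h | h <;> omega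

lemma Nat.succ_mod_succ_mod_ne_self {k i : ℕ} (hk : 2 < k) (hi : i < k) :
    ((i + 1) % k + 1) % k ≠ i := by
  rcases Nat.succ_mod_cases hi with h | h <;>
    rcases Nat.succ_mod_cases (Nat.mod_lt (i + 1) (by omega : 0 < k)) with h' | h' <;> omega

lemma Nat.even_succ_mod_iff {k i : ℕ} (hk : Even k) (hi : i < k) :
    Even ((i + 1) % k) ↔ ¬Even i := by
  rcases Nat.succ_mod_cases hi with ⟨h, -⟩ | ⟨h, h'⟩
  · rw [h, Nat.even_add_one]
  · rw [h]
    subst h'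
    simpa [Nat.even_add_one] using hk

lemma Fin.sigma_ext_iff {k : ℕ} {n : Fin k → ℕ} {x y : (i : Fin k) × Fin (n i)} :
    x = y ↔ x.1 = y.1 ∧ x.2.val = y.2.val := by
  rw [Sigma.ext_iff]
  exact and_congr_right fun h => Fin.heq_ext_iff (congrArg n h)

namespace Fin

variable {k : ℕ} (n : Fin k → ℕ)

def blockStart (i : ℕ) : ℕ :=
  ∑ j ∈ range i, if h : j < k then n ⟨j, h⟩ else 0

lemma blockStart_succ (i : Fin k) : blockStart n (i + 1) = blockStart n i + n i := by
  rw [blockStart, sum_range_succ, dif_pos i.isLt]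
  rfl

lemma blockStart_zero : blockStart n 0 = 0 := rfl

lemma blockStart_self : blockStart n k = ∑ i, n i := by
  rw [blockStart, ← Fin.sum_univ_eq_sum_range fun j => if h : j < k then n ⟨j, h⟩ else 0]
  exact sum_congr rfl fun i _ => by rw [dif_pos i.isLt]

lemma finSigmaFinEquiv_val (x : (i : Fin k) × Fin (n i)) :
    (finSigmaFinEquiv x : ℕ) = blockStart n x.1 + x.2 := by
  rw [finSigmaFinEquiv_apply, blockStart,
    ← Fin.sum_univ_eq_sum_range fun j => if h : j < k then n ⟨j, h⟩ else 0]
  exact congrArg (· + _) (sum_congr rfl fun j _ => by rw [dif_pos]; rfl)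

lemma blockStart_succ_mod (hn : ∀ i, 0 < n i) (i : Fin k) :
    blockStart n (i + 1) % (∑ i, n i) = blockStart n ((i + 1) % k) := by
  rcases Nat.succ_mod_cases i.isLt with ⟨hmod, hlt⟩ | ⟨hmod, heq⟩
  · have hlt :=
      (finSigmaFinEquiv (⟨⟨i + 1, hlt⟩, ⟨0, hn _⟩⟩ : (i : Fin k) × Fin (n i))).isLt
    rw [finSigmaFinEquiv_val] at hlt
    rw [hmod]
    exact Nat.mod_eq_of_lt hlt
  · rw [hmod, heq, blockStart_self, Nat.mod_self, blockStart_zero]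

def IsCyclicSucc (x y : (i : Fin k) × Fin (n i)) : Prop :=
  (x.1 = y.1 ∧ x.2.val + 1 = y.2.val) ∨
    (y.1.val = (x.1.val + 1) % k ∧ x.2.val + 1 = n x.1 ∧ y.2.val = 0)

theorem finSigmaFinEquiv_succ_mod_eq_iff (hn : ∀ i, 0 < n i) (x y : (i : Fin k) × Fin (n i)) :
    ((finSigmaFinEquiv x : ℕ) + 1) % (∑ i, n i) = finSigmaFinEquiv y ↔
      IsCyclicSucc n x y := by
  obtain ⟨i, s⟩ := x
  have hy := y.2.isLt
  have eq_iff {z : (i : Fin k) × Fin (n i)}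
      (hz : (blockStart n i + (s + 1)) % (∑ i, n i) = finSigmaFinEquiv z) :
      ((finSigmaFinEquiv ⟨i, s⟩ : ℕ) + 1) % (∑ i, n i) = finSigmaFinEquiv y ↔ z = y := by
    rw [finSigmaFinEquiv_val, add_assoc, hz, Fin.val_inj, finSigmaFinEquiv.injective.eq_iff]
  by_cases hs : s.val + 1 < n i
  · have hz := (finSigmaFinEquiv (⟨i, ⟨s + 1, hs⟩⟩ : (i : Fin k) × Fin (n i))).isLt
    rw [finSigmaFinEquiv_val] at hz
    rw [eq_iff (z := ⟨i, ⟨s + 1, hs⟩⟩) (by rw [finSigmaFinEquiv_val, Nat.mod_eq_of_lt hz]),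
      Fin.sigma_ext_iff, IsCyclicSucc]
    have : s.val + 1 ≠ n i := hs.ne
    simp only
    tauto
  · have hlast : s.val + 1 = n i := by omega
    have hnext : (i.val + 1) % k < k := Nat.mod_lt _ i.pos
    rw [eq_iff (z := ⟨⟨_, hnext⟩, ⟨0, hn _⟩⟩) (by
        rw [finSigmaFinEquiv_val, hlast, ← blockStart_succ, blockStart_succ_mod n hn]; rfl),
      Fin.sigma_ext_iff, IsCyclicSucc]
    have : ¬(i = y.1 ∧ s.val + 1 = y.2) := by rintro ⟨rfl, h⟩; omega
    simp only [Fin.ext_iff] at this ⊢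
    omega

variable {n}

lemma isCyclicSucc_mk_mk_iff (hk : 2 ≤ k) {i : Fin k} {s t : Fin (n i)} :
    IsCyclicSucc n ⟨i, s⟩ ⟨i, t⟩ ↔ s.val + 1 = t := by
  simp [IsCyclicSucc, (Nat.succ_mod_ne_self hk i.isLt).symm]

lemma isCyclicSucc_iff_of_fst_ne {x y : (i : Fin k) × Fin (n i)} (h : x.1 ≠ y.1) :
    IsCyclicSucc n x y ↔ y.1.val = (x.1.val + 1) % k ∧ x.2.val + 1 = n x.1 ∧ y.2.val = 0 := by
  simp [IsCyclicSucc, h]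

lemma IsCyclicSucc.not_even_iff (hk : Even k) {x y : (i : Fin k) × Fin (n i)}
    (h : IsCyclicSucc n x y) (hne : x.1 ≠ y.1) : ¬(Even x.1.val ↔ Even y.1.val) := by
  rw [(isCyclicSucc_iff_of_fst_ne hne).1 h |>.1, Nat.even_succ_mod_iff hk x.1.isLt]
  tauto

end Fin

section PreOddHole

variable {V : Type*} {G : SimpleGraph V} {v : V}

lemma plusAdj_iff_adj {x y : V} (h : G.Adj v x ↔ G.Adj v y) : plusAdj G v x y ↔ G.Adj x y := by
  unfold plusAdj; tauto

lemma plusAdj_iff_not_adj {x y : V} (h : ¬(G.Adj v x ↔ G.Adj v y)) :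
    plusAdj G v x y ↔ ¬G.Adj x y := by
  unfold plusAdj; tauto

variable {k : ℕ} {n : Fin k → ℕ} {p : (i : Fin k) → Fin (n i) → V}

lemma not_adj_iff_of_consecutive {i j : Fin k} {hi : n i - 1 < n i} {hj : 0 < n j}
    (hna : ¬G.Adj (p i ⟨n i - 1, hi⟩) (p j ⟨0, hj⟩))
    (hall : ∀ a b, (a.val ≠ n i - 1 ∨ b.val ≠ 0) → G.Adj (p i a) (p j b))
    (s : Fin (n i)) (t : Fin (n j)) :
    ¬G.Adj (p i s) (p j t) ↔ s.val + 1 = n i ∧ t.val = 0 := by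
  constructor
  · intro h
    by_contra hst
    exact h (hall s t (by omega))
  · rintro ⟨hs, ht⟩
    obtain rfl : s = ⟨n i - 1, hi⟩ := Fin.ext (show s.val = n i - 1 by omega)
    obtain rfl : t = ⟨0, hj⟩ := Fin.ext ht
    exact hna

lemma not_adj_iff_of_two_sectors {i j : Fin k} {hi : n i - 1 < n i} {hj : 0 < n j}
    {hi' : 0 < n i} {hj' : n j - 1 < n j}
    (hna : ¬G.Adj (p i ⟨n i - 1, hi⟩) (p j ⟨0, hj⟩))
    (hna' : ¬G.Adj (p j ⟨n j - 1, hj'⟩) (p i ⟨0, hi'⟩))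
    (hall : ∀ a b, (a.val ≠ n i - 1 ∨ b.val ≠ 0) → (a.val ≠ 0 ∨ b.val ≠ n j - 1) →
      G.Adj (p i a) (p j b))
    (s : Fin (n i)) (t : Fin (n j)) :
    ¬G.Adj (p i s) (p j t) ↔
      (s.val + 1 = n i ∧ t.val = 0) ∨ (t.val + 1 = n j ∧ s.val = 0) := by
  constructor
  · intro h
    by_contra hst
    exact h (hall s t (by omega) (by omega))
  · rintro (⟨hs, ht⟩ | ⟨ht, hs⟩)
    · obtain rfl : s = ⟨n i - 1, hi⟩ := Fin.ext (show s.val = n i - 1 by omega)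
      obtain rfl : t = ⟨0, hj⟩ := Fin.ext ht
      exact hna
    · obtain rfl : s = ⟨0, hi'⟩ := Fin.ext hs
      obtain rfl : t = ⟨n j - 1, hj'⟩ := Fin.ext (show t.val = n j - 1 by omega)
      exact fun h => hna' h.symm

lemma not_adj_iff_isCyclicSucc_of_eq_two (hk : k = 2) (hn : ∀ i, 0 < n i)
    (hk2 : ∀ i j : Fin k, i ≠ j →
      (¬ G.Adj (p i ⟨n i - 1, Nat.sub_lt (hn i) Nat.one_pos⟩) (p j ⟨0, hn j⟩)) ∧
      ∀ a : Fin (n i), ∀ b : Fin (n j),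
        (a.val ≠ n i - 1 ∨ b.val ≠ 0) → (a.val ≠ 0 ∨ b.val ≠ n j - 1) →
        G.Adj (p i a) (p j b))
    {i j : Fin k} (hij : i ≠ j) (s : Fin (n i)) (t : Fin (n j)) :
    ¬G.Adj (p i s) (p j t) ↔
      Fin.IsCyclicSucc n ⟨i, s⟩ ⟨j, t⟩ ∨ Fin.IsCyclicSucc n ⟨j, t⟩ ⟨i, s⟩ := by
  rw [Fin.isCyclicSucc_iff_of_fst_ne hij, Fin.isCyclicSucc_iff_of_fst_ne hij.symm]
  obtain ⟨hna, hall⟩ := hk2 i j hij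
  obtain ⟨hna', -⟩ := hk2 j i hij.symm
  rw [not_adj_iff_of_two_sectors hna hna' hall]
  subst hk
  have hji : j.val = (i.val + 1) % 2 ∧ i.val = (j.val + 1) % 2 := by
    have := Fin.val_ne_of_ne hij
    omega
  tauto

lemma not_adj_iff_isCyclicSucc_of_two_lt (hk : 2 < k) (hn : ∀ i, 0 < n i)
    (hfar : ∀ i j : Fin k, ¬(Even i.val ↔ Even j.val) →
      j.val ≠ (i.val + 1) % k → i.val ≠ (j.val + 1) % k → ∀ s t, G.Adj (p i s) (p j t))
    (hconsec : ∀ i j : Fin k, j.val = (i.val + 1) % k →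
      (¬ G.Adj (p i ⟨n i - 1, Nat.sub_lt (hn i) Nat.one_pos⟩) (p j ⟨0, hn j⟩)) ∧
      ∀ a : Fin (n i), ∀ b : Fin (n j), (a.val ≠ n i - 1 ∨ b.val ≠ 0) →
        G.Adj (p i a) (p j b))
    {i j : Fin k} (hij : i ≠ j) (hpar : ¬(Even i.val ↔ Even j.val))
    (s : Fin (n i)) (t : Fin (n j)) :
    ¬G.Adj (p i s) (p j t) ↔
      Fin.IsCyclicSucc n ⟨i, s⟩ ⟨j, t⟩ ∨ Fin.IsCyclicSucc n ⟨j, t⟩ ⟨i, s⟩ := by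
  rw [Fin.isCyclicSucc_iff_of_fst_ne hij, Fin.isCyclicSucc_iff_of_fst_ne hij.symm]
  by_cases hc1 : j.val = (i.val + 1) % k
  · obtain ⟨hna, hall⟩ := hconsec i j hc1
    have hc2 : i.val ≠ (j.val + 1) % k := hc1 ▸ (Nat.succ_mod_succ_mod_ne_self hk i.isLt).symm
    rw [not_adj_iff_of_consecutive hna hall]
    tauto
  by_cases hc2 : i.val = (j.val + 1) % k
  · obtain ⟨hna, hall⟩ := hconsec j i hc2
    rw [G.adj_comm, not_adj_iff_of_consecutive hna hall]
    tauto
  · exact iff_of_false (not_not.2 (hfar i j hpar hc1 hc2 s t)) (by tauto)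

theorem plusAdj_iff_isCyclicSucc (hkeven : Even k) (hk : 2 ≤ k) (hn : ∀ i, 0 < n i)
    (hpath : ∀ i, ∀ a b : Fin (n i),
      (G.Adj (p i a) (p i b) ↔ (a.val + 1 = b.val ∨ b.val + 1 = a.val)))
    (hNv : ∀ i s, G.Adj v (p i s) ↔ Odd i.val)
    (hsame : ∀ i j : Fin k, i ≠ j → (Even i.val ↔ Even j.val) →
      ∀ s t, ¬G.Adj (p i s) (p j t))
    (hfar : ∀ i j : Fin k, ¬(Even i.val ↔ Even j.val) →
      j.val ≠ (i.val + 1) % k → i.val ≠ (j.val + 1) % k → ∀ s t, G.Adj (p i s) (p j t))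
    (hconsec : 2 < k → ∀ i j : Fin k, j.val = (i.val + 1) % k →
      (¬ G.Adj (p i ⟨n i - 1, Nat.sub_lt (hn i) Nat.one_pos⟩) (p j ⟨0, hn j⟩)) ∧
      ∀ a : Fin (n i), ∀ b : Fin (n j), (a.val ≠ n i - 1 ∨ b.val ≠ 0) →
        G.Adj (p i a) (p j b))
    (hk2 : k = 2 → ∀ i j : Fin k, i ≠ j →
      (¬ G.Adj (p i ⟨n i - 1, Nat.sub_lt (hn i) Nat.one_pos⟩) (p j ⟨0, hn j⟩)) ∧
      ∀ a : Fin (n i), ∀ b : Fin (n j),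
        (a.val ≠ n i - 1 ∨ b.val ≠ 0) → (a.val ≠ 0 ∨ b.val ≠ n j - 1) →
        G.Adj (p i a) (p j b))
    (x y : (i : Fin k) × Fin (n i)) :
    plusAdj G v (Sigma.uncurry p x) (Sigma.uncurry p y) ↔
      Fin.IsCyclicSucc n x y ∨ Fin.IsCyclicSucc n y x := by
  obtain ⟨i, s⟩ := x
  obtain ⟨j, t⟩ := y
  change plusAdj G v (p i s) (p j t) ↔ _
  have hv : (G.Adj v (p i s) ↔ G.Adj v (p j t)) ↔ (Even i.val ↔ Even j.val) := by
    rw [hNv, hNv, ← Nat.not_even_iff_odd, ← Nat.not_even_iff_odd, not_iff_not]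
  by_cases hij : i = j
  · subst hij
    rw [plusAdj_iff_adj (hv.2 Iff.rfl), hpath, Fin.isCyclicSucc_mk_mk_iff hk,
      Fin.isCyclicSucc_mk_mk_iff hk]
  by_cases hpar : Even i.val ↔ Even j.val
  · rw [plusAdj_iff_adj (hv.2 hpar)]
    refine iff_of_false (hsame i j hij hpar s t) ?_
    rintro (h | h)
    · exact h.not_even_iff hkeven hij hpar
    · exact h.not_even_iff hkeven (Ne.symm hij) hpar.symm
  rw [plusAdj_iff_not_adj (mt hv.1 hpar)]
  rcases hk.eq_or_lt with hk | hk
  · exact not_adj_iff_isCyclicSucc_of_eq_two hk.symm hn (hk2 hk.symm) hij s t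
  · exact not_adj_iff_isCyclicSucc_of_two_lt hk hn hfar (hconsec hk) hij hpar s t

end PreOddHole

lemma Fintype.eq_card_sub_one_of_bijective_onto_ne {V : Type*} [Fintype V] [DecidableEq V]
    {v : V} {m : ℕ} {c : Fin m → V} (hinj : Function.Injective c) (hne : ∀ a, c a ≠ v)
    (hsurj : ∀ x, x ≠ v → ∃ a, c a = x) : m = Fintype.card V - 1 := by
  have h := Fintype.card_congr <| Equiv.ofBijective (fun a => (⟨c a, hne a⟩ : {x // x ≠ v}))
    ⟨fun a b h => hinj (congrArg Subtype.val h),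
      fun x => (hsurj x x.2).imp fun _ h => Subtype.ext h⟩
  simpa [Fintype.card_subtype_compl] using h

lemma Sigma.uncurry_injective_of_partition {V : Type*} {v : V} {k : ℕ} {n : Fin k → ℕ}
    {p : (i : Fin k) → Fin (n i) → V} {P : Fin k → Finset V}
    (hpinj : ∀ i, Function.Injective (p i)) (hmem : ∀ i s, p i s ∈ P i)
    (hpv : ∀ i s, p i s ≠ v) (hpart : ∀ x : V, x ≠ v → ∃! i, x ∈ P i) :
    Function.Injective (Sigma.uncurry p) := by
  rintro ⟨i, s⟩ ⟨j, t⟩ (h : p i s = p j t)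
  obtain rfl : i = j := (hpart _ (hpv i s)).unique (hmem i s) (h ▸ hmem j t)
  obtain rfl := hpinj i h
  rfl

/-- If `(G, v)` is a pre-odd-hole centered at `v` with sectors `P 0, …, P (k-1)`
(each `P i` an induced path `p i 0, …, p i (n i - 1)` of `G`, the sectors partitioning
`V(G) \ {v}`, with `N(v)` the union of the sectors of odd index, no edges between
distinct sectors of equal parity, all edges between sectors of different parity that
are not cyclically consecutive, and between cyclically consecutive sectors all edges
except that the last vertex of a sector is non-adjacent to the first vertex of the
next — with the appropriate variant when `k = 2`), then the graph `G⁺(v)` contains an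
odd hole: traversing the sectors in order yields an induced cycle of odd length at
least 5 in `G⁺(v)` through all the vertices other than `v`. -/
theorem stmt19 {V : Type*} [Fintype V] [DecidableEq V] (G : SimpleGraph V) (v : V)
    (heven : Even (Fintype.card V)) (hbig : 6 ≤ Fintype.card V)
    (k : ℕ) (hkeven : Even k) (hkpos : 0 < k)
    (P : Fin k → Finset V)
    (n : Fin k → ℕ) (hn : ∀ i, 0 < n i)
    (p : (i : Fin k) → Fin (n i) → V)
    (hpinj : ∀ i, Function.Injective (p i))
    (hP : ∀ i, P i = Finset.image (p i) Finset.univ)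
    (hnv : ∀ i, v ∉ P i)
    (hpart : ∀ x : V, x ≠ v → ∃! i, x ∈ P i)
    (hpath : ∀ i, ∀ a b : Fin (n i),
      (G.Adj (p i a) (p i b) ↔ (a.val + 1 = b.val ∨ b.val + 1 = a.val)))
    (hNv : ∀ i, ∀ x ∈ P i, (G.Adj v x ↔ Odd i.val))
    (hsame : ∀ i j : Fin k, i ≠ j → (Even i.val ↔ Even j.val) →
      ∀ x ∈ P i, ∀ y ∈ P j, ¬ G.Adj x y)
    (hfar : ∀ i j : Fin k, ¬(Even i.val ↔ Even j.val) →
      j.val ≠ (i.val + 1) % k → i.val ≠ (j.val + 1) % k →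
      ∀ x ∈ P i, ∀ y ∈ P j, G.Adj x y)
    (hconsec : 2 < k → ∀ i j : Fin k, j.val = (i.val + 1) % k →
      (¬ G.Adj (p i ⟨n i - 1, Nat.sub_lt (hn i) Nat.one_pos⟩) (p j ⟨0, hn j⟩)) ∧
      ∀ a : Fin (n i), ∀ b : Fin (n j), (a.val ≠ n i - 1 ∨ b.val ≠ 0) →
        G.Adj (p i a) (p j b))
    (hk2 : k = 2 → ∀ i j : Fin k, i ≠ j →
      (¬ G.Adj (p i ⟨n i - 1, Nat.sub_lt (hn i) Nat.one_pos⟩) (p j ⟨0, hn j⟩)) ∧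
      ∀ a : Fin (n i), ∀ b : Fin (n j),
        (a.val ≠ n i - 1 ∨ b.val ≠ 0) → (a.val ≠ 0 ∨ b.val ≠ n j - 1) →
        G.Adj (p i a) (p j b)) :
    ∃ m : ℕ, Odd m ∧ 5 ≤ m ∧ m = Fintype.card V - 1 ∧
      ∃ c : Fin m → V, Function.Injective c ∧ (∀ a, c a ≠ v) ∧
        (∀ x : V, x ≠ v → ∃ a, c a = x) ∧
        ∀ a b : Fin m, plusAdj G v (c a) (c b) ↔
          ((a.val + 1) % m = b.val ∨ (b.val + 1) % m = a.val) := by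
  have hk : 2 ≤ k := by obtain ⟨r, rfl⟩ := hkeven; omega
  have hmem : ∀ i s, p i s ∈ P i := fun i s => hP i ▸ mem_image_of_mem _ (mem_univ s)
  have hpv : ∀ i s, p i s ≠ v := fun i s h => hnv i (h ▸ hmem i s)
  let c : Fin (∑ i, n i) → V := Sigma.uncurry p ∘ finSigmaFinEquiv.symm
  have hcinj : Function.Injective c :=
    (Sigma.uncurry_injective_of_partition hpinj hmem hpv hpart).comp
      finSigmaFinEquiv.symm.injective
  have hcsurj : ∀ x, x ≠ v → ∃ a, c a = x := by
    intro x hx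
    obtain ⟨i, hi, -⟩ := hpart x hx
    obtain ⟨s, -, rfl⟩ := mem_image.1 (hP i ▸ hi)
    exact ⟨finSigmaFinEquiv ⟨i, s⟩, congrArg (Sigma.uncurry p) (Equiv.symm_apply_apply _ _)⟩
  have hm := Fintype.eq_card_sub_one_of_bijective_onto_ne hcinj (fun _ => hpv _ _) hcsurj
  refine ⟨_, hm ▸ Nat.Even.sub_odd (by omega) heven odd_one, by omega, hm, c, hcinj,
    fun _ => hpv _ _, hcsurj, fun a b => ?_⟩
  simp only [c, Function.comp_apply]
  rw [plusAdj_iff_isCyclicSucc hkeven hk hn hpath (fun i s => hNv i _ (hmem i s))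
      (fun i j hij hpar s t => hsame i j hij hpar _ (hmem i s) _ (hmem j t))
      (fun i j hpar h1 h2 s t => hfar i j hpar h1 h2 _ (hmem i s) _ (hmem j t)) hconsec hk2,
    ← Fin.finSigmaFinEquiv_succ_mod_eq_iff n hn, ← Fin.finSigmaFinEquiv_succ_mod_eq_iff n hn]
  simp only [Equiv.apply_symm_apply]
end
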